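/- arXiv:2408.13377 — 2 statements merged into one kernel-verified Lean document; each statement's English description precedes it below -/
import Mathlib

section
/- Let l : ℝ^m → ℝ be L-Lipschitz (L > 0), let y₁, y₂ satisfy l(y₁) ≥ 0 and l(y₂) ≥ 0, and set r₁ = l(y₁)/L, r₂ = l(y₂)/L. If the closed ball B(y₁, r₁) is contained in the closed ball B(y₂, r₂), then ‖y₁ − y₂‖ = |r₁ − r₂| = r₂ − r₁. -/
/-! The point of `B(y₁, r₁)` farthest from `y₂` lies at distance `r₁ + ‖y₁ - y₂‖` from `y₂`, so the
containment gives `r₁ + ‖y₁ - y₂‖ ≤ r₂`; the Lipschitz bound gives `r₂ - r₁ ≤ ‖y₁ - y₂‖`. -/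

open Metric

section NormedSpace

variable {E : Type*} [NormedAddCommGroup E] [NormedSpace ℝ E] [Nontrivial E]

lemma exists_norm_eq_one_and_eq_norm_smul (v : E) : ∃ u : E, ‖u‖ = 1 ∧ v = ‖v‖ • u := by
  by_cases hv : v = 0
  · obtain ⟨u, hu⟩ := exists_norm_eq E zero_le_one
    exact ⟨u, hu, by simp [hv]⟩
  · refine ⟨‖v‖⁻¹ • v, ?_, ?_⟩
    · rw [norm_smul, norm_inv, norm_norm, inv_mul_cancel₀ (norm_ne_zero_iff.mpr hv)]
    · rw [smul_inv_smul₀ (norm_ne_zero_iff.mpr hv)]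

lemma add_dist_le_of_closedBall_subset {x y : E} {r s : ℝ} (hr : 0 ≤ r)
    (h : closedBall x r ⊆ closedBall y s) : r + dist x y ≤ s := by
  obtain ⟨u, hu, hxy⟩ := exists_norm_eq_one_and_eq_norm_smul (x - y)
  have hz : x + r • u ∈ closedBall y s := h (by simp [norm_smul, hu, abs_of_nonneg hr])
  have hzy : x + r • u - y = (r + dist x y) • u := by
    rw [add_smul, dist_eq_norm, ← hxy]; abel
  rwa [mem_closedBall, dist_eq_norm, hzy, norm_smul, hu, mul_one, Real.norm_eq_abs,
    abs_of_nonneg (by positivity)] at hz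

end NormedSpace

lemma div_sub_div_le_norm_sub {E : Type*} [SeminormedAddCommGroup E] {l : E → ℝ} {L : ℝ}
    (hL : 0 < L) (hlip : ∀ a b, |l a - l b| ≤ L * ‖a - b‖) (a b : E) :
    l a / L - l b / L ≤ ‖a - b‖ := by
  rw [div_sub_div_same, div_le_iff₀ hL, mul_comm]
  exact (le_abs_self _).trans (hlip a b)

theorem bubble_containment_eq_general {m : ℕ} (hm : 1 ≤ m)
    (l : EuclideanSpace ℝ (Fin m) → ℝ) (L : ℝ) (hL : 0 < L)
    (hlip : ∀ a b, |l a - l b| ≤ L * ‖a - b‖)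
    (y₁ y₂ : EuclideanSpace ℝ (Fin m)) (hy₁ : 0 ≤ l y₁)
    (hsub : Metric.closedBall y₁ (l y₁ / L) ⊆ Metric.closedBall y₂ (l y₂ / L)) :
    ‖y₁ - y₂‖ = |l y₁ / L - l y₂ / L| ∧ ‖y₁ - y₂‖ = l y₂ / L - l y₁ / L := by
  have : Nonempty (Fin m) := ⟨⟨0, hm⟩⟩
  have hball := add_dist_le_of_closedBall_subset (div_nonneg hy₁ hL.le) hsub
  have hlip₂₁ := div_sub_div_le_norm_sub hL hlip y₂ y₁
  rw [dist_eq_norm] at hball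
  rw [norm_sub_rev] at hlip₂₁
  have hdist : ‖y₁ - y₂‖ = l y₂ / L - l y₁ / L := by linarith
  refine ⟨?_, hdist⟩
  rw [abs_sub_comm, abs_of_nonneg (hdist ▸ norm_nonneg _), hdist]

theorem bubble_containment_eq {m : ℕ} (hm : 1 ≤ m)
    (l : EuclideanSpace ℝ (Fin m) → ℝ) (L : ℝ) (hL : 0 < L)
    (hlip : ∀ a b, |l a - l b| ≤ L * ‖a - b‖)
    (y₁ y₂ : EuclideanSpace ℝ (Fin m)) (hy₁ : 0 ≤ l y₁) (hy₂ : 0 ≤ l y₂)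
    (hsub : Metric.closedBall y₁ (l y₁ / L) ⊆ Metric.closedBall y₂ (l y₂ / L)) :
    ‖y₁ - y₂‖ = |l y₁ / L - l y₂ / L| ∧ ‖y₁ - y₂‖ = l y₂ / L - l y₁ / L :=
  bubble_containment_eq_general hm l L hL hlip y₁ y₂ hy₁ hsub
end

section
/- For two closed balls B₁ = B(c₁, r₁) and B₂ = B(c₂, r₂) in ℝ^m with B₁ ∩ B₂ ≠ ∅ (i.e., ‖c₁ − c₂‖ ≤ r₁ + r₂) and B₁ ⊄ B₂, the one-sided Hausdorff distance sup_{y ∈ B₁} dist(y, B₂) equals ‖c₁ − c₂‖ + r₁ − r₂. -/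
/-!
Since `closedBall c₂ r₂` is the closed `r₂`-thickening of `{c₂}`, the distance from `y` to it is
`max (dist y c₂ - r₂) 0`. Over `y ∈ closedBall c₁ r₁` the triangle inequality bounds `dist y c₂`
by `dist c₁ c₂ + r₁`, and this bound is attained at the point of the sphere `sphere c₁ r₁` lying on
the ray from `c₂` through `c₁`. Finally `B₁ ⊄ B₂` makes `dist c₁ c₂ + r₁ - r₂` positive, so the
truncation at `0` disappears.
-/

open Metric

lemma Real.biSup_eq_of_forall_le_of_eq {α : Type*} {s : Set α} {f : α → ℝ} {a : ℝ}
    (ha : 0 ≤ a) (hle : ∀ x ∈ s, f x ≤ a) {x : α} (hx : x ∈ s) (hfx : f x = a) :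
    ⨆ y ∈ s, f y = a := by
  have hbound : ∀ y, ⨆ _ : y ∈ s, f y ≤ a := fun y => Real.iSup_le (hle y) ha
  refine le_antisymm (Real.iSup_le hbound ha) ?_
  calc a = ⨆ _ : x ∈ s, f x := by rw [ciSup_pos hx, hfx]
    _ ≤ ⨆ y ∈ s, f y := le_ciSup ⟨a, Set.forall_mem_range.2 hbound⟩ x

section NormedSpace

variable {E : Type*} [NormedAddCommGroup E] [NormedSpace ℝ E]

lemma infDist_closedBall (y c : E) {r : ℝ} (hr : 0 ≤ r) :
    infDist y (closedBall c r) = max (dist y c - r) 0 := by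
  rw [infDist, ← cthickening_singleton c hr, infEDist_cthickening, infEDist_singleton,
    edist_dist, ← ENNReal.ofReal_sub _ hr, ENNReal.toReal_ofReal']

lemma exists_norm_eq_one_smul_eq [Nontrivial E] (x : E) : ∃ v : E, ‖v‖ = 1 ∧ ‖x‖ • v = x := by
  by_cases hx : x = 0
  · obtain ⟨v, hv⟩ := exists_norm_eq E zero_le_one
    exact ⟨v, hv, by simp [hx]⟩
  · exact ⟨NormedSpace.normalize x, NormedSpace.norm_normalize hx,
      NormedSpace.norm_smul_normalize x⟩

lemma exists_mem_closedBall_dist_eq_dist_add [Nontrivial E] (c p : E) {r : ℝ} (hr : 0 ≤ r) :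
    ∃ y ∈ closedBall c r, dist y p = dist c p + r := by
  obtain ⟨v, hv, hcp⟩ := exists_norm_eq_one_smul_eq (c - p)
  refine ⟨c + r • v, ?_, ?_⟩
  · simp [norm_smul, hv, abs_of_nonneg hr]
  · have hyp : c + r • v - p = (‖c - p‖ + r) • v := by rw [add_smul, hcp]; abel
    rw [dist_eq_norm, hyp, norm_smul, hv, mul_one, Real.norm_of_nonneg (by positivity),
      dist_eq_norm]

lemma biSup_infDist_closedBall [Nontrivial E] (c₁ c₂ : E) {r₁ r₂ : ℝ} (hr₁ : 0 ≤ r₁)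
    (hr₂ : 0 ≤ r₂) :
    ⨆ y ∈ closedBall c₁ r₁, infDist y (closedBall c₂ r₂) = max (dist c₁ c₂ + r₁ - r₂) 0 := by
  obtain ⟨y₀, hy₀, hy₀_dist⟩ := exists_mem_closedBall_dist_eq_dist_add c₁ c₂ hr₁
  refine Real.biSup_eq_of_forall_le_of_eq (le_max_right _ _) (fun y hy => ?_) hy₀ ?_
  · rw [infDist_closedBall y c₂ hr₂]
    have hyc₂ := dist_triangle y c₁ c₂
    have hyc₁ := mem_closedBall.1 hy
    gcongr
    linarith
  · rw [infDist_closedBall y₀ c₂ hr₂, hy₀_dist]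

end NormedSpace

theorem one_sided_hausdorff_general {m : ℕ} (hm : 1 ≤ m)
    (c₁ c₂ : EuclideanSpace ℝ (Fin m)) (r₁ r₂ : ℝ) (hr₁ : 0 < r₁) (hr₂ : 0 < r₂)
    (hnsub : ¬ Metric.closedBall c₁ r₁ ⊆ Metric.closedBall c₂ r₂) :
    (⨆ y ∈ Metric.closedBall c₁ r₁, Metric.infDist y (Metric.closedBall c₂ r₂)) =
      ‖c₁ - c₂‖ + r₁ - r₂ := by
  have : Nonempty (Fin m) := ⟨⟨0, hm⟩⟩
  obtain ⟨x, hx₁, hx₂⟩ := Set.not_subset.1 hnsub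
  have hxc₂ : r₂ < dist x c₂ := lt_of_not_ge hx₂
  have hx_triangle := dist_triangle x c₁ c₂
  have hxc₁ := mem_closedBall.1 hx₁
  rw [biSup_infDist_closedBall c₁ c₂ hr₁.le hr₂.le, max_eq_left (by linarith), dist_eq_norm]

theorem one_sided_hausdorff {m : ℕ} (hm : 1 ≤ m)
    (c₁ c₂ : EuclideanSpace ℝ (Fin m)) (r₁ r₂ : ℝ) (hr₁ : 0 < r₁) (hr₂ : 0 < r₂)
    (hinter : ‖c₁ - c₂‖ ≤ r₁ + r₂)
    (hnsub : ¬ Metric.closedBall c₁ r₁ ⊆ Metric.closedBall c₂ r₂) :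
    (⨆ y ∈ Metric.closedBall c₁ r₁, Metric.infDist y (Metric.closedBall c₂ r₂)) =
      ‖c₁ - c₂‖ + r₁ - r₂ :=
  one_sided_hausdorff_general hm c₁ c₂ r₁ r₂ hr₁ hr₂ hnsub
end
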